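/- Let φ ∈ L_CPL, let p ∈ Var(φ), and let V = Var(φ). Then φ is CPL-satisfiable if and only if the FP-abduction problem P = ⟨∅, Pr(φ), {p}, {0,1}⟩ has a full solution. -/

import Mathlib

open scoped Classical

/-- Classical propositional formulas (the language `L_CPL`), built from
propositional variables (indexed by `ℕ`) using ¬, ∧, ∨. -/
inductive CPL where
  | var : ℕ → CPL
  | neg : CPL → CPL
  | and : CPL → CPL → CPL
  | or : CPL → CPL → CPL
deriving DecidableEq

namespace CPL

/-- The set of propositional variables occurring in a formula. -/
def vars : CPL → Finset ℕ
  | var p => {p}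
  | neg φ => vars φ
  | and φ χ => vars φ ∪ vars χ
  | or φ χ => vars φ ∪ vars χ

/-- Classical evaluation of a formula under a Boolean valuation. -/
def eval (v : ℕ → Bool) : CPL → Bool
  | var p => v p
  | neg φ => !eval v φ
  | and φ χ => eval v φ && eval v χ
  | or φ χ => eval v φ || eval v χ

/-- Evaluation of a formula at a state given as a set of variables:
the variables in `X` are true, all others false. -/
def evalSet (X : Finset ℕ) (φ : CPL) : Bool := eval (fun p => decide (p ∈ X)) φ

/-- CPL-satisfiability. -/
def Satisfiable (φ : CPL) : Prop := ∃ v, eval v φ = true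

/-- CPL-validity. -/
def Valid (φ : CPL) : Prop := ∀ v, eval v φ = true

/-- Classical entailment `φ ⊨_CPL χ`. -/
def Entails (φ χ : CPL) : Prop := ∀ v, eval v φ = true → eval v χ = true

/-- A literal: a variable or a negated variable. -/
def IsLiteral (φ : CPL) : Prop := (∃ p, φ = var p) ∨ ∃ p, φ = neg (var p)

/-- An `L_CPL`-term: a conjunction of literals. -/
inductive IsTerm : CPL → Prop
  | lit {φ} : IsLiteral φ → IsTerm φ
  | conj {φ χ} : IsTerm φ → IsTerm χ → IsTerm (and φ χ)

/-- A conjunction of propositional variables. -/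
inductive IsConjVars : CPL → Prop
  | var (p : ℕ) : IsConjVars (var p)
  | conj {φ χ} : IsConjVars φ → IsConjVars χ → IsConjVars (and φ χ)

/-- A disjunction of propositional variables. -/
inductive IsDisjVars : CPL → Prop
  | var (p : ℕ) : IsDisjVars (var p)
  | disj {φ χ} : IsDisjVars φ → IsDisjVars χ → IsDisjVars (or φ χ)

/-- Variables occurring as positive literals (in a term). -/
def posVars : CPL → Finset ℕ
  | var p => {p}
  | neg _ => ∅
  | and φ χ => posVars φ ∪ posVars χ
  | or _ _ => ∅

/-- Variables occurring as negated literals (in a term). -/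
def negVars : CPL → Finset ℕ
  | var _ => ∅
  | neg (var p) => {p}
  | neg _ => ∅
  | and φ χ => negVars φ ∪ negVars χ
  | or _ _ => ∅

/-- The literals occurring in a term. -/
def lits (φ : CPL) : Finset CPL :=
  (posVars φ).image var ∪ (negVars φ).image (fun p => neg (var p))

end CPL

/-- A state (possible world) over a finite set `V` of variables: a subset of `V`. -/
abbrev World (V : Finset ℕ) := {X : Finset ℕ // X ⊆ V}

/-- A probabilistic model for `V`: a finitely additive probability measure
`μ : 2^(2^V) → [0,1]`. -/
structure ProbModel (V : Finset ℕ) where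
  μ : Set (World V) → ℝ
  nonneg : ∀ A, 0 ≤ μ A
  le_one : ∀ A, μ A ≤ 1
  m_univ : μ Set.univ = 1
  m_empty : μ ∅ = 0
  m_add : ∀ A B : Set (World V), Disjoint A B → μ (A ∪ B) = μ A + μ B

/-- The truth set `‖φ‖_M` of a classical formula in a probabilistic model for `V`. -/
def truthSet (V : Finset ℕ) (φ : CPL) : Set (World V) :=
  {w | CPL.evalSet w.1 φ = true}

/-- Comparison symbols ◇ ∈ {≤, <, >, ≥}. -/
inductive Ineq where
  | le | lt | gt | ge
deriving DecidableEq

/-- The relation denoted by a comparison symbol. -/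
def Ineq.holds : Ineq → ℝ → ℝ → Prop
  | le, x, c => x ≤ c
  | lt, x, c => x < c
  | gt, x, c => x > c
  | ge, x, c => x ≥ c

/-- Formulas of the probabilistic language `L^Q_Pr`, built from probabilistic atoms
`Pr(φ)` and `Pr(φ)◇c̄` using ¬, △, ⊙, ⊕, →. -/
inductive FP where
  | prob : CPL → FP
  | probIneq : CPL → Ineq → ℚ → FP
  | neg : FP → FP
  | delta : FP → FP
  | conj : FP → FP → FP
  | disj : FP → FP → FP
  | impl : FP → FP → FP
deriving DecidableEq

namespace FP

/-- Well-formedness: all rational constants lie in `[0,1] ∩ ℚ`. -/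
def WF : FP → Prop
  | prob _ => True
  | probIneq _ _ c => 0 ≤ c ∧ c ≤ 1
  | neg α => WF α
  | delta α => WF α
  | conj α β => WF α ∧ WF β
  | disj α β => WF α ∧ WF β
  | impl α β => WF α ∧ WF β

/-- The variables of an `L^Q_Pr`-formula. -/
def vars : FP → Finset ℕ
  | prob φ => φ.vars
  | probIneq φ _ _ => φ.vars
  | neg α => vars α
  | delta α => vars α
  | conj α β => vars α ∪ vars β
  | disj α β => vars α ∪ vars β
  | impl α β => vars α ∪ vars β

/-- The events `E(α)`: the classical formulas occurring in probabilistic atoms of `α`. -/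
def events : FP → Finset CPL
  | prob φ => {φ}
  | probIneq φ _ _ => {φ}
  | neg α => events α
  | delta α => events α
  | conj α β => events α ∪ events β
  | disj α β => events α ∪ events β
  | impl α β => events α ∪ events β

/-- The FP-interpretation `I_M` induced by a probabilistic model `M`. -/
noncomputable def interp {V : Finset ℕ} (M : ProbModel V) : FP → ℝ
  | prob φ => M.μ (truthSet V φ)
  | probIneq φ d c => if d.holds (M.μ (truthSet V φ)) (c : ℝ) then 1 else 0
  | neg α => 1 - interp M α
  | delta α => if interp M α = 1 then 1 else 0
  | conj α β => max 0 (interp M α + interp M β - 1)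
  | disj α β => min 1 (interp M α + interp M β)
  | impl α β => min 1 (1 - interp M α + interp M β)

/-- `α` is FP-satisfiable: `I_M(α) = 1` in some probabilistic model for `Var(α)`. -/
def Satisfiable (α : FP) : Prop := ∃ M : ProbModel α.vars, interp M α = 1

/-- `α` is FP-valid: `I_M(α) = 1` in every probabilistic model for `Var(α)`. -/
def Valid (α : FP) : Prop := ∀ M : ProbModel α.vars, interp M α = 1

/-- `α ⊨_FP β`: `I_M(β) = 1` in every probabilistic model for the variables of
`{α, β}` with `I_M(α) = 1`. -/
def Entails1 (α β : FP) : Prop :=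
  ∀ M : ProbModel (α.vars ∪ β.vars), interp M α = 1 → interp M β = 1

/-- The variables of a finite set of `L^Q_Pr`-formulas. -/
def varsSet (Γ : Finset FP) : Finset ℕ := Γ.sup vars

/-- A finite set `Γ` is FP-satisfiable (`Γ ⊭_FP ⊥`): some probabilistic model for
the variables of `Γ` makes every member of `Γ` equal to `1`. -/
def SetSatisfiable (Γ : Finset FP) : Prop :=
  ∃ M : ProbModel (varsSet Γ), ∀ γ ∈ Γ, interp M γ = 1

/-- `Γ ⊨_FP δ`: every probabilistic model for the variables of `Γ ∪ {δ}` satisfying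
all of `Γ` satisfies `δ`. -/
def EntailsFin (Γ : Finset FP) (δ : FP) : Prop :=
  ∀ M : ProbModel (varsSet Γ ∪ δ.vars), (∀ γ ∈ Γ, interp M γ = 1) → interp M δ = 1

/-- `Γ ⊨^cons_FP δ`: `Γ ⊨_FP δ` and `Γ ⊭_FP ⊥`. -/
def ConsEntails (Γ : Finset FP) (δ : FP) : Prop :=
  EntailsFin Γ δ ∧ SetSatisfiable Γ

/-- The set of permitted values `V_Pr(Pr(φ)◇c̄)`. -/
def permittedValues (φ : CPL) (d : Ineq) (c : ℚ) : Set ℝ :=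
  {x | ∃ (V : Finset ℕ) (M : ProbModel V), φ.vars ⊆ V ∧
      interp M (probIneq φ d c) = 1 ∧ M.μ (truthSet V φ) = x}

end FP

/-- Formulas of the Łukasiewicz language `L^Q_Ł`, built from propositional variables
and truth-constant literals `p◇c̄` using ¬, △, ⊙, ⊕, →. -/
inductive Luk where
  | var : ℕ → Luk
  | ineq : ℕ → Ineq → ℚ → Luk
  | neg : Luk → Luk
  | delta : Luk → Luk
  | conj : Luk → Luk → Luk
  | disj : Luk → Luk → Luk
  | impl : Luk → Luk → Luk
deriving DecidableEq

/-- An Ł-valuation: a function `Var → [0,1]`. -/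
structure LukVal where
  v : ℕ → ℝ
  mem : ∀ p, v p ∈ Set.Icc (0 : ℝ) 1

/-- Extension of an Ł-valuation to all `L^Q_Ł`-formulas. -/
noncomputable def LukVal.eval (val : LukVal) : Luk → ℝ
  | .var p => val.v p
  | .ineq p d c => if d.holds (val.v p) (c : ℝ) then 1 else 0
  | .neg φ => 1 - val.eval φ
  | .delta φ => if val.eval φ = 1 then 1 else 0
  | .conj φ χ => max 0 (val.eval φ + val.eval χ - 1)
  | .disj φ χ => min 1 (val.eval φ + val.eval χ)
  | .impl φ χ => min 1 (1 - val.eval φ + val.eval χ)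

namespace Luk

/-- Well-formedness: all rational constants lie in `[0,1] ∩ ℚ`. -/
def WF : Luk → Prop
  | var _ => True
  | ineq _ _ c => 0 ≤ c ∧ c ≤ 1
  | neg φ => WF φ
  | delta φ => WF φ
  | conj φ χ => WF φ ∧ WF χ
  | disj φ χ => WF φ ∧ WF χ
  | impl φ χ => WF φ ∧ WF χ

/-- `Φ ⊨_Ł χ` for a finite set `Φ`. -/
def EntailsFin (Φ : Finset Luk) (χ : Luk) : Prop :=
  ∀ val : LukVal, (∀ φ ∈ Φ, val.eval φ = 1) → val.eval χ = 1

/-- `φ` is Ł-valid. -/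
def ValidL (φ : Luk) : Prop := ∀ val : LukVal, val.eval φ = 1

/-- A set of `L^Q_Ł`-formulas is Ł-satisfiable. -/
def SatisfiableSet (S : Set Luk) : Prop := ∃ val : LukVal, ∀ φ ∈ S, val.eval φ = 1

/-- The probabilistic counterpart `φ^Pr` of a Łukasiewicz formula. -/
def toFP : Luk → FP
  | var p => .prob (.var p)
  | ineq p d c => .probIneq (.var p) d c
  | neg φ => .neg (toFP φ)
  | delta φ => .delta (toFP φ)
  | conj φ χ => .conj (toFP φ) (toFP χ)
  | disj φ χ => .disj (toFP φ) (toFP χ)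
  | impl φ χ => .impl (toFP φ) (toFP χ)

end Luk

namespace FP

/-- The outer counterpart `α^↑` of an `L^Q_Pr`-formula, replacing each atom `Pr(φ)`
by the fresh variable `e φ` (and `Pr(φ)◇c̄` by `(e φ)◇c̄`). -/
def outer (e : CPL → ℕ) : FP → Luk
  | prob φ => .var (e φ)
  | probIneq φ d c => .ineq (e φ) d c
  | neg α => .neg (outer e α)
  | delta α => .delta (outer e α)
  | conj α β => .conj (outer e α) (outer e β)
  | disj α β => .disj (outer e α) (outer e β)
  | impl α β => .impl (outer e α) (outer e β)

end FP

/-- The ⊙-conjunction of a (nonempty) list of `L^Q_Pr`-formulas. -/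
def bigConjFP : List FP → FP
  | [] => .probIneq (.var 0) .ge 0
  | a :: t => t.foldl .conj a

/-- The ∨-disjunction of a (nonempty) list of classical formulas. -/
def bigDisjCPL : List CPL → CPL
  | [] => .var 0
  | a :: t => t.foldl .or a

/-- The PIT `⊙_i Pr(τ_i)≤c̄_i ⊙ ⊙_i Pr(τ_i)≥c̄_i` associated with the list of
pairs `(τ_i, c_i)`. -/
def completePITFormula (L : List (CPL × ℚ)) : FP :=
  bigConjFP (L.map (fun t => FP.probIneq t.1 .le t.2) ++
             L.map (fun t => FP.probIneq t.1 .ge t.2))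

/-- `τ` is an `L_CPL`-term containing, for every `p ∈ V`, exactly one of the
literals `p` and `¬p` (and no other variables). -/
def IsCompleteTermOver (V : Finset ℕ) (τ : CPL) : Prop :=
  CPL.IsTerm τ ∧ τ.vars ⊆ V ∧ ∀ p ∈ V, (p ∈ τ.posVars ↔ p ∉ τ.negVars)

/-- Membership in `𝒱 = {0, 1/n, …, (n−1)/n, 1}`. -/
def memVSet (n : ℕ) (c : ℚ) : Prop := ∃ k : ℕ, k ≤ n ∧ c = (k : ℚ) / (n : ℚ)

/-- The data `(τ_i, c_i)` of a `⟨V,𝒱⟩`-complete PIT (with `𝒱` given by `n`). -/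
def IsCompletePIT (V : Finset ℕ) (n : ℕ) (L : List (CPL × ℚ)) : Prop :=
  (L.map Prod.fst).Nodup ∧
  (∀ t ∈ L, IsCompleteTermOver V t.1 ∧ memVSet n t.2) ∧
  (L.map Prod.snd).sum = 1

/-- A measure is coherent with a value assignment `pr` on the events `E`. -/
def coherent {V : Finset ℕ} (M : ProbModel V) (E : Finset CPL) (pr : CPL → ℚ) : Prop :=
  ∀ ψ ∈ E, M.μ (truthSet V ψ) = (pr ψ : ℝ)

/-- Conditional probability `Pr_μ(φ | χ) = μ(‖φ∧χ‖)/μ(‖χ‖)`. -/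
noncomputable def condProb {V : Finset ℕ} (M : ProbModel V) (φ χ : CPL) : ℝ :=
  M.μ (truthSet V (CPL.and φ χ)) / M.μ (truthSet V χ)

/-- `τ` is a solution to the PrAP `⟨{φ}, χ, H, E, pr⟩`: an `L_CPL`-term composed of
literals from `H` s.t. `φ, τ ⊨_CPL χ` and some probabilistic model coherent with `pr`
gives `μ(‖φ∧τ‖) > 0`. -/
def IsPrAPSolution (φ χ : CPL) (H E : Finset CPL) (pr : CPL → ℚ) (τ : CPL) : Prop :=
  CPL.IsTerm τ ∧ τ.lits ⊆ H ∧
  (∀ v, CPL.eval v φ = true → CPL.eval v τ = true → CPL.eval v χ = true) ∧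
  ∃ M : ProbModel (φ.vars ∪ χ.vars),
    coherent M E pr ∧ 0 < M.μ (truthSet (φ.vars ∪ χ.vars) (CPL.and φ τ))

/-- `τ` is a preferred solution: a solution s.t. for every other solution `σ` there is
a probabilistic model coherent with `pr` with `μ(‖τ‖) ≥ μ(‖σ‖)`. -/
def IsPreferredPrAPSolution (φ χ : CPL) (H E : Finset CPL) (pr : CPL → ℚ) (τ : CPL) : Prop :=
  IsPrAPSolution φ χ H E pr τ ∧
  ∀ σ, IsPrAPSolution φ χ H E pr σ → σ ≠ τ →
    ∃ M : ProbModel (φ.vars ∪ χ.vars),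
      coherent M E pr ∧
      M.μ (truthSet (φ.vars ∪ χ.vars) σ) ≤ M.μ (truthSet (φ.vars ∪ χ.vars) τ)

/-- The FP-counterpart `Ξ_p = {Pr(ψ)≈c̄ : ψ ∈ E, p(ψ) = c}` of a value assignment,
where `Pr(ψ)≈c̄` abbreviates `(Pr(ψ)≥c̄) ⊙ (Pr(ψ)≤c̄)`. -/
def XiP (E : Finset CPL) (pr : CPL → ℚ) : Finset FP :=
  E.image (fun ψ => FP.conj (FP.probIneq ψ .ge (pr ψ)) (FP.probIneq ψ .le (pr ψ)))

/-- The next weakest PIL `λ^♭_𝒱` of the PIL `Pr(τ)◇(k/n)`. -/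
def flatPIL (n : ℕ) (τ : CPL) (d : Ineq) (k : ℕ) : FP :=
  match d with
  | .ge => FP.probIneq τ .gt (((k : ℚ) - 1) / (n : ℚ))
  | .gt => FP.probIneq τ .ge ((k : ℚ) / (n : ℚ))
  | .le => FP.probIneq τ .lt (((k : ℚ) + 1) / (n : ℚ))
  | .lt => FP.probIneq τ .le ((k : ℚ) / (n : ℚ))

/-- The theory `Ψ_Γ = Γ^↑ ∪ {p_φ → p_χ : φ, χ ∈ E[Γ], φ ⊨_CPL χ}`. -/
def PsiGamma (Γ : Finset FP) (e : CPL → ℕ) : Set Luk :=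
  (fun α => FP.outer e α) '' (↑Γ : Set FP) ∪
  {ψ | ∃ φ ∈ Γ.sup FP.events, ∃ χ ∈ Γ.sup FP.events,
        CPL.Entails φ χ ∧ ψ = Luk.impl (.var (e φ)) (.var (e χ))}

/-- The conjunction `hd ∧ ⋀_{q ∈ s} q`. -/
def conjVarsFrom (hd : CPL) (s : Finset ℕ) : CPL :=
  (s.sort (· ≤ ·)).foldl (fun acc q => CPL.and acc (CPL.var q)) hd
/-! A satisfying valuation `v` of `φ` yields the complete term `τ` of literals true under `v`;
`τ ⊨_CPL φ`, so the one-element PIT `Pr(τ) = 1` forces `Pr(φ) = 1`, and it is consistent because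
the Dirac measure at `v` satisfies it. Conversely, a model of a consistent theory entailing
`Pr(φ)` gives `‖φ‖` measure `1`, so `‖φ‖` contains a world, i.e. a satisfying valuation. -/

namespace CPL

theorem vars_nonempty (φ : CPL) : φ.vars.Nonempty := by
  induction φ with
  | var p => exact Finset.singleton_nonempty p
  | neg φ ih => exact ih
  | and φ χ ih _ => exact ih.mono Finset.subset_union_left
  | or φ χ ih _ => exact ih.mono Finset.subset_union_left

theorem eval_congr {v w : ℕ → Bool} {φ : CPL} (h : ∀ q ∈ φ.vars, v q = w q) :
    φ.eval v = φ.eval w := by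
  induction φ with
  | var q => exact h q (Finset.mem_singleton_self q)
  | neg φ ih => simp only [eval, ih h]
  | and φ χ ihφ ihχ | or φ χ ihφ ihχ =>
    simp only [vars, Finset.mem_union] at h
    simp only [eval, ihφ fun q hq => h q (Or.inl hq), ihχ fun q hq => h q (Or.inr hq)]

def litOf (v : ℕ → Bool) (q : ℕ) : CPL :=
  if v q then var q else neg (var q)

/-- `⋀_{r ∈ q :: l} litOf v r`; the separate head keeps the conjunction nonempty, hence a term. -/
def diagram (v : ℕ → Bool) : ℕ → List ℕ → CPL
  | q, [] => litOf v q
  | q, r :: l => and (litOf v q) (diagram v r l)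

variable (v : ℕ → Bool)

theorem isLiteral_litOf (q : ℕ) : (litOf v q).IsLiteral := by
  unfold litOf; split
  exacts [Or.inl ⟨q, rfl⟩, Or.inr ⟨q, rfl⟩]

theorem vars_litOf (q : ℕ) : (litOf v q).vars = {q} := by
  unfold litOf; split <;> rfl

theorem mem_posVars_litOf (p q : ℕ) : p ∈ (litOf v q).posVars ↔ p = q ∧ v p = true := by
  unfold litOf; split <;> simp_all [posVars]

theorem mem_negVars_litOf (p q : ℕ) : p ∈ (litOf v q).negVars ↔ p = q ∧ v p = false := by
  unfold litOf; split <;> simp_all [negVars]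

theorem eval_litOf (w : ℕ → Bool) (q : ℕ) : (litOf v q).eval w = true ↔ w q = v q := by
  unfold litOf; split <;> simp_all [eval]

theorem isTerm_diagram (q : ℕ) (l : List ℕ) : (diagram v q l).IsTerm := by
  induction l generalizing q with
  | nil => exact .lit (isLiteral_litOf v q)
  | cons r l ih => exact .conj (.lit (isLiteral_litOf v q)) (ih r)

theorem vars_diagram (q : ℕ) (l : List ℕ) : (diagram v q l).vars = insert q l.toFinset := by
  induction l generalizing q with
  | nil => simp [diagram, vars_litOf]
  | cons r l ih =>
    simp only [diagram, vars, vars_litOf, ih, List.toFinset_cons]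
    exact (Finset.insert_eq q _).symm

theorem mem_posVars_diagram (p q : ℕ) (l : List ℕ) :
    p ∈ (diagram v q l).posVars ↔ p ∈ q :: l ∧ v p = true := by
  induction l generalizing q with
  | nil => simp [diagram, mem_posVars_litOf]
  | cons r l ih => simp [diagram, posVars, mem_posVars_litOf, ih, or_and_right]

theorem mem_negVars_diagram (p q : ℕ) (l : List ℕ) :
    p ∈ (diagram v q l).negVars ↔ p ∈ q :: l ∧ v p = false := by
  induction l generalizing q with
  | nil => simp [diagram, mem_negVars_litOf]
  | cons r l ih => simp [diagram, negVars, mem_negVars_litOf, ih, or_and_right]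

theorem eval_diagram (w : ℕ → Bool) (q : ℕ) (l : List ℕ) :
    (diagram v q l).eval w = true ↔ ∀ r ∈ q :: l, w r = v r := by
  induction l generalizing q with
  | nil => simp [diagram, eval_litOf]
  | cons r l ih => simp [diagram, eval, eval_litOf, ih]

theorem entails_diagram {φ : CPL} (hv : φ.eval v = true) {q : ℕ} {l : List ℕ}
    (hl : φ.vars ⊆ (q :: l).toFinset) : (diagram v q l).Entails φ := fun w hw => by
  rwa [eval_congr fun r hr => (eval_diagram v w q l).1 hw r (by simpa using hl hr)]

end CPL

theorem isCompleteTermOver_diagram (v : ℕ → Bool) {V : Finset ℕ} {q : ℕ} (hq : q ∈ V) :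
    IsCompleteTermOver V (CPL.diagram v q V.toList) := by
  refine ⟨CPL.isTerm_diagram v q _, by simp [CPL.vars_diagram, hq], fun p hp => ?_⟩
  rw [CPL.mem_posVars_diagram, CPL.mem_negVars_diagram]
  cases v p <;> simp [hp]

theorem isCompletePIT_singleton {V : Finset ℕ} {n : ℕ} (hn : n ≠ 0) {τ : CPL}
    (hτ : IsCompleteTermOver V τ) : IsCompletePIT V n [(τ, 1)] :=
  ⟨List.nodup_singleton τ, by simpa using ⟨hτ, n, le_rfl, by simp [hn]⟩, by simp⟩

theorem completePITFormula_singleton (τ : CPL) (c : ℚ) :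
    completePITFormula [(τ, c)] = .conj (.probIneq τ .le c) (.probIneq τ .ge c) := rfl

theorem truthSet_subset_of_entails (V : Finset ℕ) {τ φ : CPL} (h : τ.Entails φ) :
    truthSet V τ ⊆ truthSet V φ := fun _ hw => h _ hw

theorem exists_mem_truthSet {V : Finset ℕ} {φ : CPL} (hφ : φ.vars ⊆ V) {v : ℕ → Bool}
    (hv : φ.eval v = true) : ∃ w : World V, w ∈ truthSet V φ :=
  ⟨⟨V.filter (v ·), Finset.filter_subset _ _⟩, by
    show CPL.evalSet _ φ = true
    rwa [CPL.evalSet, CPL.eval_congr (w := v) fun q hq => by simp [hφ hq]]⟩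

namespace ProbModel

variable {V W : Finset ℕ}

theorem mono (M : ProbModel V) {A B : Set (World V)} (h : A ⊆ B) : M.μ A ≤ M.μ B := by
  have hadd := M.m_add A (B \ A) disjoint_sdiff_self_right
  rw [Set.union_sdiff_cancel h] at hadd
  linarith [M.nonneg (B \ A)]

theorem nonempty_of_μ_eq_one (M : ProbModel V) {A : Set (World V)} (h : M.μ A = 1) :
    A.Nonempty := by
  rw [Set.nonempty_iff_ne_empty]
  rintro rfl
  simp [M.m_empty] at h

noncomputable def dirac (w : World V) : ProbModel V where
  μ A := if w ∈ A then 1 else 0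
  nonneg A := by split <;> norm_num
  le_one A := by split <;> norm_num
  m_univ := by simp
  m_empty := by simp
  m_add A B h := by
    by_cases hA : w ∈ A <;> by_cases hB : w ∈ B
    · exact absurd hB (Set.disjoint_left.mp h hA)
    all_goals simp [hA, hB]

noncomputable def map (h : V ⊆ W) (M : ProbModel V) : ProbModel W where
  μ A := M.μ ((fun X : World V => (⟨X.1, X.2.trans h⟩ : World W)) ⁻¹' A)
  nonneg _ := M.nonneg _
  le_one _ := M.le_one _
  m_univ := M.m_univ
  m_empty := M.m_empty
  m_add _ _ hd := M.m_add _ _ (hd.preimage _)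

end ProbModel

namespace FP

variable {V W : Finset ℕ}

theorem interp_map (h : V ⊆ W) (M : ProbModel V) (α : FP) :
    interp (M.map h) α = interp M α := by
  induction α with
  | prob ψ | probIneq ψ d c => rfl
  | neg α ih | delta α ih => simp only [interp, ih]
  | conj α β ihα ihβ | disj α β ihα ihβ | impl α β ihα ihβ => simp only [interp, ihα, ihβ]

theorem interp_conj_le_ge_eq_one_iff (M : ProbModel V) (ψ : CPL) (c : ℚ) :
    interp M (.conj (.probIneq ψ .le c) (.probIneq ψ .ge c)) = 1 ↔
      M.μ (truthSet V ψ) = c := by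
  simp only [interp, Ineq.holds]
  constructor
  · intro h
    by_contra hne
    rcases lt_or_gt_of_ne hne with hlt | hgt
    · simp [hlt.le, not_le.2 hlt] at h
    · simp [hgt.le, not_le.2 hgt] at h
  · intro h
    simp [h]

theorem satisfiable_of_consEntails_prob {Γ : Finset FP} {φ : CPL}
    (h : ConsEntails Γ (prob φ)) : φ.Satisfiable := by
  obtain ⟨hΓφ, M, hM⟩ := h
  have hφ := hΓφ (M.map Finset.subset_union_left) fun γ hγ => by
    rw [interp_map]; exact hM γ hγ
  obtain ⟨w, hw⟩ := ProbModel.nonempty_of_μ_eq_one _ hφ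
  exact ⟨_, hw⟩

theorem consEntails_pin_prob {τ φ : CPL} (hτ : τ.Satisfiable) (hτφ : τ.Entails φ) :
    ConsEntails {completePITFormula [(τ, 1)]} (prob φ) := by
  simp only [ConsEntails, EntailsFin, SetSatisfiable, Finset.mem_singleton, forall_eq,
    completePITFormula_singleton, interp_conj_le_ge_eq_one_iff]
  constructor
  · intro M hM
    refine le_antisymm (M.le_one _) ?_
    calc (1 : ℝ) = M.μ (truthSet _ τ) := by exact_mod_cast hM.symm
      _ ≤ M.μ (truthSet _ φ) := M.mono (truthSet_subset_of_entails _ hτφ)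
  · obtain ⟨v, hv⟩ := hτ
    obtain ⟨w, hw⟩ := exists_mem_truthSet
      (V := varsSet {.conj (.probIneq τ .le 1) (.probIneq τ .ge 1)}) (by simp [varsSet, vars]) hv
    refine ⟨ProbModel.dirac w, ?_⟩
    simp [ProbModel.dirac, hw]

end FP

theorem stmt18_general (φ : CPL) :
    φ.Satisfiable ↔
      ∃ L : List (CPL × ℚ), L ≠ [] ∧ IsCompletePIT φ.vars 1 L ∧
        FP.ConsEntails {completePITFormula L} (FP.prob φ) := by
  constructor
  · rintro ⟨v, hv⟩
    obtain ⟨q, hq⟩ := φ.vars_nonempty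
    have hτφ : (CPL.diagram v q φ.vars.toList).Entails φ :=
      CPL.entails_diagram v hv (by simp)
    refine ⟨[(CPL.diagram v q φ.vars.toList, 1)], List.cons_ne_nil _ _,
      isCompletePIT_singleton one_ne_zero (isCompleteTermOver_diagram v hq),
      FP.consEntails_pin_prob ⟨v, (CPL.eval_diagram v v q _).2 fun _ _ => rfl⟩ hτφ⟩
  · rintro ⟨L, -, -, h⟩
    exact FP.satisfiable_of_consEntails_prob h

/-- For `φ ∈ L_CPL`, `p ∈ Var(φ)`, and `V = Var(φ)`: `φ` is
CPL-satisfiable iff the FP-abduction problem `P = ⟨∅, Pr(φ), {p}, {0,1}⟩` has a full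
solution, i.e. a `⟨V,{0,1}⟩`-complete PIT `θ` with `θ ⊨^cons_FP Pr(φ)`. -/
theorem stmt18 (φ : CPL) (p : ℕ) (hp : p ∈ φ.vars) :
    φ.Satisfiable ↔
      ∃ L : List (CPL × ℚ), L ≠ [] ∧ IsCompletePIT φ.vars 1 L ∧
        FP.ConsEntails {completePITFormula L} (FP.prob φ) :=
  stmt18_general φ
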